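/- Let G and H be graphs and v a vertex of G that is dismantlable, i.e., there exists another vertex w with N(v) ⊆ N(w), where N(x) is the set of vertices adjacent to x. Then the inclusion of the induced subgraph G ∖ v into G is a ×-homotopy equivalence: there is a graph homomorphism g : G → G ∖ v such that the composites lie in the same connected component of the corresponding Hom posets as the identities. -/

import Mathlib

/-!
Fold `v` onto `w`: the map `r` sending `v` to `w` and fixing every other vertex. Since
`N(v) ⊆ N(w)`, every edge `x ~ y` of `G` gives an edge `x ~ r y`. Hence `r` is a homomorphism
`G → G ∖ v` whose restriction to `G ∖ v` is the identity, and the multi-homomorphism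
`x ↦ {x, r x}` lies above both `r` and `id_G` in `Hom(G, G)`, connecting them.
-/

/-- A graph: a symmetric relation on a vertex type (loops allowed). -/
structure LGraph (V : Type*) where
  adj : V → V → Prop
  symm : ∀ {x y : V}, adj x y → adj y x

variable {V W U : Type*}

/-- `f` is a graph homomorphism from `G` to `H`. -/
def IsGraphHom (G : LGraph V) (H : LGraph W) (f : V → W) : Prop :=
  ∀ {x y : V}, G.adj x y → H.adj (f x) (f y)

/-- The type of graph homomorphisms. -/
def GHom (G : LGraph V) (H : LGraph W) := {f : V → W // IsGraphHom G H f}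

def GHom.id (G : LGraph V) : GHom G G := ⟨fun x => x, fun h => h⟩

def GHom.comp {G : LGraph V} {H : LGraph W} {K : LGraph U}
    (g : GHom H K) (f : GHom G H) : GHom G K :=
  ⟨fun x => g.1 (f.1 x), fun h => g.2 (f.2 h)⟩

/-- `η` is a multi-homomorphism from `G` to `H`. -/
def IsMultiHom (G : LGraph V) (H : LGraph W) (η : V → Set W) : Prop :=
  (∀ x, (η x).Nonempty) ∧
    ∀ {x y}, G.adj x y → ∀ a ∈ η x, ∀ b ∈ η y, H.adj a b

/-- The Hom complex `Hom(G,H)`: the poset of multi-homomorphisms. -/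
def MultiHom (G : LGraph V) (H : LGraph W) := {η : V → Set W // IsMultiHom G H η}

instance (G : LGraph V) (H : LGraph W) : PartialOrder (MultiHom G H) :=
  Subtype.partialOrder _

/-- A graph homomorphism regarded as a multi-homomorphism (pointwise singletons). -/
def GHom.toMulti {G : LGraph V} {H : LGraph W} (f : GHom G H) : MultiHom G H :=
  ⟨fun x => {f.1 x}, fun x => ⟨f.1 x, rfl⟩, by
    intro x y h a ha b hb
    rw [Set.mem_singleton_iff] at ha hb
    subst ha; subst hb
    exact f.2 h⟩

/-- Two homomorphisms are ×-homotopic iff they lie in the same connected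
component of the poset `Hom(G,H)`. -/
def XHomotopic {G : LGraph V} {H : LGraph W} (f g : GHom G H) : Prop :=
  Relation.ReflTransGen (fun η η' : MultiHom G H => η ≤ η' ∨ η' ≤ η)
    f.toMulti g.toMulti

/-- The induced subgraph of `G` on a set `S` of vertices. -/
def induced (G : LGraph V) (S : Set V) : LGraph S where
  adj x y := G.adj x.1 y.1
  symm h := G.symm h

/-- The inclusion of an induced subgraph. -/
def inclHom (G : LGraph V) (S : Set V) : GHom (induced G S) G :=
  ⟨fun x => x.1, fun h => h⟩

theorem XHomotopic.of_adj {G : LGraph V} {H : LGraph W} {f g : GHom G H}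
    (hfg : ∀ {x y}, G.adj x y → H.adj (f.1 x) (g.1 y)) : XHomotopic f g := by
  let η : MultiHom G H :=
    ⟨fun x => {f.1 x, g.1 x}, fun x => ⟨f.1 x, Or.inl rfl⟩, by
      rintro x y hxy a (rfl | rfl) b (rfl | rfl)
      · exact f.2 hxy
      · exact hfg hxy
      · exact H.symm (hfg (G.symm hxy))
      · exact g.2 hxy⟩
  have hf : f.toMulti ≤ η := fun x => by simp [GHom.toMulti, η]
  have hg : g.toMulti ≤ η := fun x => by simp [GHom.toMulti, η]
  exact .head (Or.inl hf) (.single (Or.inr hg))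

theorem XHomotopic.refl {G : LGraph V} {H : LGraph W} (f : GHom G H) : XHomotopic f f :=
  Relation.ReflTransGen.refl

namespace LGraph

variable {G : LGraph V} {v w : V}

open scoped Classical in
noncomputable def fold (hwv : w ≠ v) (x : V) : {x : V | x ≠ v} :=
  if h : x = v then ⟨w, hwv⟩ else ⟨x, h⟩

variable (hwv : w ≠ v)

theorem fold_of_ne (x : {x : V | x ≠ v}) : fold hwv x.1 = x :=
  dif_neg x.2

theorem adj_fold_right (hN : ∀ x, G.adj v x → G.adj w x) {x y : V} (h : G.adj x y) :
    G.adj x (fold hwv y).1 := by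
  by_cases hy : y = v
  · subst hy
    simpa [fold] using G.symm (hN x (G.symm h))
  · simpa [fold, hy] using h

theorem adj_fold_left (hN : ∀ x, G.adj v x → G.adj w x) {x y : V} (h : G.adj x y) :
    G.adj (fold hwv x).1 y :=
  G.symm (adj_fold_right hwv hN (G.symm h))

noncomputable def foldHom (hN : ∀ x, G.adj v x → G.adj w x) :
    GHom G (induced G {x | x ≠ v}) :=
  ⟨fold hwv, fun h => adj_fold_left hwv hN (adj_fold_right hwv hN h)⟩

theorem foldHom_comp_inclHom (hN : ∀ x, G.adj v x → G.adj w x) :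
    (foldHom hwv hN).comp (inclHom G {x | x ≠ v}) = GHom.id _ :=
  Subtype.ext (funext (fold_of_ne hwv))

theorem xHomotopic_inclHom_comp_foldHom (hN : ∀ x, G.adj v x → G.adj w x) :
    XHomotopic ((inclHom G {x | x ≠ v}).comp (foldHom hwv hN)) (GHom.id G) :=
  .of_adj fun h => adj_fold_left hwv hN h

end LGraph

open LGraph in
/-- If `v` is a dismantlable vertex of `G` (there is another vertex `w` with
`N(v) ⊆ N(w)`), then the inclusion `G ∖ v ↪ G` of the induced subgraph on the
remaining vertices is a ×-homotopy equivalence. -/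
theorem stmt_7 (G : LGraph V) (v w : V) (hwv : w ≠ v)
    (hN : ∀ x, G.adj v x → G.adj w x) :
    ∃ g : GHom G (induced G {x | x ≠ v}),
      XHomotopic ((inclHom G {x | x ≠ v}).comp g) (GHom.id G) ∧
      XHomotopic (g.comp (inclHom G {x | x ≠ v})) (GHom.id (induced G {x | x ≠ v})) := by
  refine ⟨foldHom hwv hN, xHomotopic_inclHom_comp_foldHom hwv hN, ?_⟩
  rw [foldHom_comp_inclHom]
  exact .refl _
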